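/- For every n ≥ 1, the number of survivors of the first n stages of the model sieve that are ≤ ∏_{i=1}^{n} (x i) equals ∏_{i=1}^{n} (x i − 1); that is, #{k : ℕ | f n k ≤ ∏_{i=1}^{n} x i} = ∏_{i=1}^{n} (x i − 1). -/

import Mathlib

/-!
Stage `n + 1` of the sieve deletes one residue class modulo `x = modelX (n + 1)` from the index
set, so `gx x` advances by `x` whenever its argument advances by `x - 1`. Composing these shifts,
`modelF n` advances by `∏ x i` whenever its argument advances by `∏ (x i - 1)`. As `modelF n` is
strictly increasing with `modelF n 0 = 1`, this gives `modelF n (∏ (x i - 1)) = ∏ x i + 1`, so the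
survivors `≤ ∏ x i` are exactly those of index `< ∏ (x i - 1)`.
-/

/-- `gx x` is the 0-indexed strictly increasing enumeration of `{k : ℕ | k % x ≠ 1}`. -/
noncomputable def gx (x : ℕ) : ℕ → ℕ := Nat.nth (fun k => k % x ≠ 1)

/-- `modelF n` is the 0-indexed strictly increasing enumeration of the integers surviving
`n` stages of the model sieve:  `modelF 0 k = k + 1` and
`modelF (n+1) k = modelF n (gx (modelX (n+1)) k)` where `modelX (n+1) = modelF n 1`. -/
noncomputable def modelF : ℕ → ℕ → ℕ
  | 0, k => k + 1
  | n + 1, k => modelF n (gx (modelF n 1) k)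

/-- `modelX n` is the `n`-th model prime (`modelX 1 = 2, modelX 2 = 3, modelX 3 = 5, ...`). -/
noncomputable def modelX (n : ℕ) : ℕ := modelF (n - 1) 1

/-- `Lcount n t` is the number of survivors of the first `n` stages of the model sieve
that are `≤ t`. -/
noncomputable def Lcount (n t : ℕ) : ℕ := Set.ncard {k : ℕ | modelF n k ≤ t}

open Function

namespace Nat

variable {p : ℕ → Prop} {a : ℕ}

theorem infinite_setOf_of_periodic (hp : Periodic p a) (ha : 0 < a) {m : ℕ} (hm : p m) :
    (Set.ofPred p).Infinite :=
  Set.infinite_of_forall_exists_gt fun b =>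
    ⟨m + (b + 1) * a, show p _ by rwa [← cast_id (b + 1), hp.nat_mul (b + 1) m], by nlinarith⟩

variable [DecidablePred p]

theorem count_add_period (hp : Periodic p a) (m : ℕ) :
    count p (m + a) = count p m + count p a := by
  induction m with
  | zero => simp
  | succ m ih =>
    simp only [Nat.add_right_comm m 1 a, count_succ, ih, hp m]
    ring

theorem nth_add_count_period (hp : Periodic p a) (hinf : (Set.ofPred p).Infinite) (k : ℕ) :
    nth p (k + count p a) = nth p k + a := by
  have hmem : p (nth p k + a) := (hp _).mpr (nth_mem_of_infinite hinf k)
  rw [← nth_count hmem, count_add_period hp, count_nth_of_infinite hinf]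

theorem apply_add_mul_of_apply_add {f : ℕ → ℕ} {q d : ℕ} (h : ∀ k, f (k + q) = f k + d)
    (k j : ℕ) : f (k + q * j) = f k + d * j := by
  induction j with
  | zero => simp
  | succ j ih => rw [mul_succ, ← Nat.add_assoc, h, ih, mul_succ, Nat.add_assoc]

end Nat

section gx

variable {x : ℕ}

theorem periodic_mod_ne_one (x : ℕ) : Periodic (fun k => k % x ≠ 1) x := fun k => by
  simp only [Nat.add_mod_right]

theorem count_mod_ne_one (hx : 2 ≤ x) : Nat.count (fun k => k % x ≠ 1) x = x - 1 := by
  rw [Nat.count_eq_card_filter_range]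
  have : (Finset.range x).filter (fun k => k % x ≠ 1) = (Finset.range x).erase 1 := by
    ext k
    simp only [Finset.mem_filter, Finset.mem_range, Finset.mem_erase]
    constructor
    · rintro ⟨hk, h1⟩
      exact ⟨by rwa [Nat.mod_eq_of_lt hk] at h1, hk⟩
    · rintro ⟨h1, hk⟩
      exact ⟨hk, by rwa [Nat.mod_eq_of_lt hk]⟩
  rw [this, Finset.card_erase_of_mem (Finset.mem_range.mpr hx), Finset.card_range]

theorem infinite_setOf_mod_ne_one (hx : 0 < x) : (Set.ofPred fun k => k % x ≠ 1).Infinite :=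
  Nat.infinite_setOf_of_periodic (periodic_mod_ne_one x) hx (m := 0) (by simp)

theorem gx_strictMono (hx : 0 < x) : StrictMono (gx x) :=
  Nat.nth_strictMono (infinite_setOf_mod_ne_one hx)

theorem gx_zero (x : ℕ) : gx x 0 = 0 := Nat.nth_zero_of_zero (by simp)

theorem gx_add_mul (hx : 2 ≤ x) (k j : ℕ) : gx x (k + (x - 1) * j) = gx x k + x * j := by
  refine Nat.apply_add_mul_of_apply_add (fun k => ?_) k j
  rw [← count_mod_ne_one hx]
  exact Nat.nth_add_count_period (periodic_mod_ne_one x) (infinite_setOf_mod_ne_one (by omega)) k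

end gx

theorem one_le_modelF (n k : ℕ) : 1 ≤ modelF n k := by
  induction n generalizing k with
  | zero => simp [modelF]
  | succ n ih => exact ih _

theorem modelF_strictMono (n : ℕ) : StrictMono (modelF n) := by
  induction n with
  | zero => exact fun a b h => by simpa [modelF] using h
  | succ n ih => exact ih.comp (gx_strictMono (one_le_modelF n 1))

theorem modelF_zero (n : ℕ) : modelF n 0 = 1 := by
  induction n with
  | zero => rfl
  | succ n ih => simp [modelF, gx_zero, ih]

theorem two_le_modelX (i : ℕ) : 2 ≤ modelX i :=
  (modelF_zero (i - 1)).symm.trans_lt (modelF_strictMono (i - 1) zero_lt_one)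

theorem modelF_add_prod (n k : ℕ) :
    modelF n (k + ∏ i ∈ Finset.Icc 1 n, (modelX i - 1)) =
      modelF n k + ∏ i ∈ Finset.Icc 1 n, modelX i := by
  induction n generalizing k with
  | zero => simp [modelF]
  | succ n ih =>
    have hx : modelX (n + 1) = modelF n 1 := rfl
    rw [Finset.prod_Icc_succ_top (Nat.le_add_left 1 n),
      Finset.prod_Icc_succ_top (Nat.le_add_left 1 n), hx]
    change modelF n (gx (modelF n 1) _) = modelF n (gx (modelF n 1) k) + _
    rw [mul_comm _ (modelF n 1 - 1), gx_add_mul (hx ▸ two_le_modelX _), mul_comm (modelF n 1),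
      Nat.apply_add_mul_of_apply_add ih]

theorem StrictMono.ncard_setOf_lt_apply {f : ℕ → ℕ} (hf : StrictMono f) (q : ℕ) :
    {k | f k < f q}.ncard = q := by
  simp_rw [hf.lt_iff_lt]
  exact Set.ncard_Iio_nat q

theorem model_sieve_count_in_period_general (n : ℕ) :
    Set.ncard {k : ℕ | modelF n k ≤ ∏ i ∈ Finset.Icc 1 n, modelX i} =
      ∏ i ∈ Finset.Icc 1 n, (modelX i - 1) := by
  have hperiod := modelF_add_prod n 0
  rw [zero_add, modelF_zero] at hperiod
  rw [← (modelF_strictMono n).ncard_setOf_lt_apply (∏ i ∈ Finset.Icc 1 n, (modelX i - 1)),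
    hperiod]
  simp_rw [Nat.lt_one_add_iff]

/-- The number of survivors of the first `n` stages of the model sieve that are
`≤ ∏_{i=1}^{n} x i` equals `∏_{i=1}^{n} (x i - 1)`. -/
theorem model_sieve_count_in_period (n : ℕ) (hn : 1 ≤ n) :
    Set.ncard {k : ℕ | modelF n k ≤ ∏ i ∈ Finset.Icc 1 n, modelX i} =
      ∏ i ∈ Finset.Icc 1 n, (modelX i - 1) :=
  model_sieve_count_in_period_general n
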